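/- arXiv:1407.8438 — 2 statements merged into one kernel-verified Lean document; each statement's English description precedes it below -/
import Mathlib

section
/- Let X be a complete CAT(-1) space, x₀ ∈ X, and r, ε > 0. Then there exists R > 0, depending only on r and ε, such that for all x, y ∈ X: if the metric projections u, v of x and y respectively onto the closed ball B̄(x₀, r) satisfy d(u,v) ≥ ε, then the geodesic segment [x,y] intersects the closed ball B̄(x₀, R). -/
/-- `p` lies on a geodesic segment between `x` and `y`. -/
def MetricBtw {X : Type*} [MetricSpace X] (x p y : X) : Prop :=
  dist x p + dist p y = dist x y

/-- `X` is a geodesic metric space: any two points are joined by a segment,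
realized pointwise at every ratio `t ∈ [0,1]`. -/
def IsGeodesicSpace (X : Type*) [MetricSpace X] : Prop :=
  ∀ x y : X, ∀ t : ℝ, t ∈ Set.Icc (0 : ℝ) 1 →
    ∃ p : X, dist x p = t * dist x y ∧ MetricBtw x p y

/-- A subset is (geodesically) convex. -/
def MetricConvex {X : Type*} [MetricSpace X] (K : Set X) : Prop :=
  ∀ x ∈ K, ∀ y ∈ K, ∀ p : X, MetricBtw x p y → p ∈ K

/-- The CAT(-1) comparison inequality: distances between points on the sides of a
triangle are bounded by the corresponding distances in a comparison triangle in the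
hyperbolic plane `ℍ²` (the upper half-plane with its hyperbolic metric). -/
def IsCatMinusOne (X : Type*) [MetricSpace X] : Prop :=
  ∀ x y z p q : X, MetricBtw x p y → MetricBtw x q z →
    ∀ x' y' z' p' q' : UpperHalfPlane,
      dist x' y' = dist x y → dist x' z' = dist x z → dist y' z' = dist y z →
      MetricBtw x' p' y' → dist x' p' = dist x p →
      MetricBtw x' q' z' → dist x' q' = dist x q →
      dist p q ≤ dist p' q'

/-- The CAT(0) comparison inequality (comparison triangles in the Euclidean plane). -/
def IsCatZero (X : Type*) [MetricSpace X] : Prop :=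
  ∀ x y z p q : X, MetricBtw x p y → MetricBtw x q z →
    ∀ x' y' z' p' q' : EuclideanSpace ℝ (Fin 2),
      dist x' y' = dist x y → dist x' z' = dist x z → dist y' z' = dist y z →
      MetricBtw x' p' y' → dist x' p' = dist x p →
      MetricBtw x' q' z' → dist x' q' = dist x q →
      dist p q ≤ dist p' q'

/-- The CAT(κ) comparison inequality for `κ < 0`: the model space `M²_κ` is the
hyperbolic plane with distance multiplied by `1/√(-κ)`, so comparison triangles in
`ℍ²` have side lengths `√(-κ)` times those in `X`. -/
def IsCatNeg (κ : ℝ) (X : Type*) [MetricSpace X] : Prop :=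
  ∀ x y z p q : X, MetricBtw x p y → MetricBtw x q z →
    ∀ x' y' z' p' q' : UpperHalfPlane,
      dist x' y' = Real.sqrt (-κ) * dist x y →
      dist x' z' = Real.sqrt (-κ) * dist x z →
      dist y' z' = Real.sqrt (-κ) * dist y z →
      MetricBtw x' p' y' → dist x' p' = Real.sqrt (-κ) * dist x p →
      MetricBtw x' q' z' → dist x' q' = Real.sqrt (-κ) * dist x q →
      Real.sqrt (-κ) * dist p q ≤ dist p' q'

/-- The CAT(κ) condition for `κ ≤ 0`. -/
def IsCatK (κ : ℝ) (X : Type*) [MetricSpace X] : Prop :=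
  if κ < 0 then IsCatNeg κ X else IsCatZero X

/-- Euclidean comparison angle determined by the three side lengths. -/
noncomputable def compAngle (a b c : ℝ) : ℝ :=
  Real.arccos ((a ^ 2 + b ^ 2 - c ^ 2) / (2 * a * b))

/-- The Alexandrov angle at `x` between `y` and `z`, defined (as is valid in CAT(0)
spaces) as the infimum of Euclidean comparison angles over points on the segments. -/
noncomputable def alexAngle {X : Type*} [MetricSpace X] (x y z : X) : ℝ :=
  sInf {θ : ℝ | ∃ p q : X, MetricBtw x p y ∧ MetricBtw x q z ∧ p ≠ x ∧ q ≠ x ∧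
    θ = compAngle (dist x p) (dist x q) (dist p q)}

/-- `K` is geodesically bounded: it contains no geodesic ray. -/
def GeodesicallyBounded {X : Type*} [MetricSpace X] (K : Set X) : Prop :=
  ¬ ∃ c : ℝ → X, (∀ s t : ℝ, 0 ≤ s → 0 ≤ t → dist (c s) (c t) = |s - t|) ∧
      ∀ t : ℝ, 0 ≤ t → c t ∈ K

/-!
Compare the triangle `x₀ x y` with a triangle in `ℍ²`. The projections `u, v` lie on
`[x₀, x]` and `[x₀, y]` at distance `r` from `x₀`; since they are `ε` apart, the comparison
angle at `x₀` has cosine at most `1 - δ`, where `δ = (cosh ε - 1) / sinh² r`. When `x` and `y`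
are far from `x₀` (otherwise `x` or `y` itself is the required point), the comparison triangle
has non-obtuse angles at `x` and `y`. So the foot of the perpendicular from `x₀` lies on the
opposite side, and the hyperbolic law of sines bounds the squared cosh of its height by
`1 + 2 / δ`. The CAT(-1) inequality for the triangle `x y x₀` carries this point back to
`[x, y]`.
-/

open Real Set

lemma exists_cosh_eq_cosh_mul_cosh_sub {a b c : ℝ} (h₁ : |a - b| ≤ c) (h₂ : c ≤ a + b) :
    ∃ t ∈ Icc (-1 : ℝ) 1, cosh c = cosh a * cosh b - sinh a * sinh b * t := by
  have hc : 0 ≤ c := (abs_nonneg _).trans h₁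
  have hlo : cosh (a - b) ≤ cosh c := cosh_le_cosh.2 (by rwa [abs_of_nonneg hc])
  have hhi : cosh c ≤ cosh (a + b) :=
    cosh_le_cosh.2 (by rwa [abs_of_nonneg hc, abs_of_nonneg (hc.trans h₂)])
  rw [cosh_sub] at hlo
  rw [cosh_add] at hhi
  obtain ⟨t, ht, hft⟩ := intermediate_value_Icc' (by norm_num : (-1 : ℝ) ≤ 1)
    (by fun_prop : Continuous fun t ↦ cosh a * cosh b - sinh a * sinh b * t).continuousOn
    (show cosh c ∈ Icc (cosh a * cosh b - sinh a * sinh b * 1)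
      (cosh a * cosh b - sinh a * sinh b * (-1)) by constructor <;> linarith)
  exact ⟨t, ht, hft.symm⟩

lemma one_sub_mul_cosh_le_sinh {δ a : ℝ} (hδ : 0 < δ) (ha : 1 / δ ≤ a) :
    (1 - δ) * cosh a ≤ sinh a := by
  have hexp : exp (-a) ≤ δ := by
    rw [exp_neg]
    refine inv_le_of_inv_le₀ hδ ?_
    linarith [add_one_le_exp a, one_div δ]
  nlinarith [cosh_sub_sinh a, one_le_cosh a]

/-- In a hyperbolic triangle with sides `a, b, c`, where `t` is the cosine of the angle between
`a` and `b`, the angle between `a` and `c` is not obtuse. -/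
lemma cosh_le_cosh_mul_cosh {a b c t : ℝ} (ha : 0 ≤ a) (hb : 0 ≤ b)
    (ht : cosh a * t ≤ sinh a) (h : cosh c = cosh a * cosh b - sinh a * sinh b * t) :
    cosh b ≤ cosh a * cosh c := by
  have hsa := sinh_nonneg_iff.2 ha
  have hsb := sinh_nonneg_iff.2 hb
  have hfactor : cosh a * cosh c - cosh b = sinh a * (sinh a * cosh b - cosh a * t * sinh b) := by
    rw [h]; linear_combination cosh b * cosh_sq a
  have : cosh a * t * sinh b ≤ sinh a * cosh b :=
    (mul_le_mul_of_nonneg_right ht hsb).trans (mul_le_mul_of_nonneg_left (sinh_lt_cosh b).le hsa)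
  nlinarith [mul_nonneg hsa (sub_nonneg.2 this)]

/-- `√(A ^ 2 - B ^ 2)` is the minimum of `s ↦ cosh s * A - sinh s * B`, attained at
`tanh s = B / A`. -/
lemma exists_mem_Icc_cosh_mul_sub_sinh_mul_eq_sqrt {A B c : ℝ} (hB : 0 ≤ B) (hBA : B < A)
    (hc : B * cosh c ≤ A * sinh c) :
    ∃ s ∈ Icc 0 c, cosh s * A - sinh s * B = √(A ^ 2 - B ^ 2) := by
  have hA : 0 < A := hB.trans_lt hBA
  have hx : B / A ∈ Ioo (-1 : ℝ) 1 :=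
    ⟨by linarith [div_nonneg hB hA.le], (div_lt_one hA).2 hBA⟩
  have hk : 0 < 1 - (B / A) ^ 2 := by nlinarith [hx.1, hx.2]
  refine ⟨artanh (B / A), ⟨artanh_nonneg (div_nonneg hB hA.le), ?_⟩, ?_⟩
  · calc artanh (B / A) ≤ artanh (tanh c) :=
          artanh_le_artanh hx.1 (tanh_lt_one c) <| by
            rw [tanh_eq_sinh_div_cosh, div_le_div_iff₀ hA (cosh_pos c)]; linarith
      _ = c := artanh_tanh c
  · rw [cosh_artanh hx, sinh_artanh hx,
      show A ^ 2 - B ^ 2 = A ^ 2 * (1 - (B / A) ^ 2) by field_simp, sqrt_mul (sq_nonneg A),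
      sqrt_sq hA.le]
    have hs := sq_sqrt hk.le
    set k := √(1 - (B / A) ^ 2)
    have hk0 : 0 < k := sqrt_pos.2 hk
    have hs' : A ^ 2 * k ^ 2 = A ^ 2 - B ^ 2 := by rw [hs]; field_simp
    field_simp
    linear_combination -hs'

/-- In a hyperbolic triangle with sides `a, b, c` whose angle `γ` between `a` and `b` has cosine
`t₁`, the left-hand side is `cosh² h` for the distance `h` from that vertex to the geodesic
through the side `c`. -/
lemma cosh_sq_sub_sinh_mul_sq_le {a b c t₁ t₂ δ : ℝ} (hδ : 0 < δ)
    (hab : 0 ≤ sinh a * sinh b) (ht₁ : t₁ ∈ Icc (-1) (1 - δ)) (hc : 0 < sinh c)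
    (h₁ : cosh c = cosh a * cosh b - sinh a * sinh b * t₁)
    (h₂ : cosh b = cosh c * cosh a - sinh c * sinh a * t₂) :
    cosh a ^ 2 - (sinh a * t₂) ^ 2 ≤ 1 + 2 / δ := by
  set P := sinh a * sinh b
  -- the law of sines `sinh c * sinh h = sinh a * sinh b * sin γ`
  have hsines :
      (cosh a ^ 2 - (sinh a * t₂) ^ 2) * sinh c ^ 2 = sinh c ^ 2 + P ^ 2 * (1 - t₁ ^ 2) := by
    linear_combination (1 - cosh a ^ 2) * cosh_sq c
      - (sinh c * sinh a * t₂ + cosh c * cosh a - cosh b) * h₂ + sinh b ^ 2 * cosh_sq a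
      + (cosh a ^ 2 - 1) * cosh_sq b + (P * t₁ + cosh a * cosh b - cosh c) * h₁
  have hgap : P * (1 - t₁) ≤ cosh c - 1 := by
    nlinarith [cosh_sub a b, one_le_cosh (a - b)]
  have hratio : P * (1 + t₁) ≤ 2 / δ * (P * (1 - t₁)) := by
    have : 1 + t₁ ≤ 2 / δ * (1 - t₁) := by
      rw [div_mul_eq_mul_div, le_div_iff₀ hδ]
      nlinarith [ht₁.1, ht₁.2]
    nlinarith [mul_le_mul_of_nonneg_left this hab]
  have hsin_sq : P ^ 2 * (1 - t₁ ^ 2) ≤ 2 / δ * sinh c ^ 2 := by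
    have hPt : 0 ≤ P * (1 - t₁) := mul_nonneg hab (by linarith [ht₁.2])
    calc P ^ 2 * (1 - t₁ ^ 2) = (P * (1 - t₁)) * (P * (1 + t₁)) := by ring
      _ ≤ (P * (1 - t₁)) * (2 / δ * (P * (1 - t₁))) := mul_le_mul_of_nonneg_left hratio hPt
      _ = 2 / δ * (P * (1 - t₁)) ^ 2 := by ring
      _ ≤ 2 / δ * (cosh c - 1) ^ 2 := by gcongr
      _ ≤ 2 / δ * sinh c ^ 2 :=
        mul_le_mul_of_nonneg_left (by nlinarith [cosh_sq c, one_le_cosh c]) (by positivity)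
  refine le_of_mul_le_mul_right ?_ (pow_pos hc 2)
  linarith

/-- `s` is the position on the side `c` of the foot of the perpendicular from the vertex between
`a` and `b`; it lies on the side because the angles at both ends of `c` are not obtuse. -/
lemma exists_mem_Icc_cosh_mul_sub_sinh_mul_le {a b c t₁ t₂ δ : ℝ} (hδ : 0 < δ)
    (ha : 1 / δ ≤ a) (hb : 1 / δ ≤ b) (hc : 0 ≤ c) (ht₁ : t₁ ∈ Icc (-1) (1 - δ))
    (h₁ : cosh c = cosh a * cosh b - sinh a * sinh b * t₁)
    (h₂ : cosh b = cosh c * cosh a - sinh c * sinh a * t₂) :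
    ∃ s ∈ Icc 0 c, cosh s * cosh a - sinh s * sinh a * t₂ ≤ √(1 + 2 / δ) := by
  have ha₀ : 0 < a := (one_div_pos.2 hδ).trans_le ha
  have hb₀ : 0 < b := (one_div_pos.2 hδ).trans_le hb
  have hsa := sinh_pos_iff.2 ha₀
  have hsb := sinh_pos_iff.2 hb₀
  have hta : cosh a * t₁ ≤ sinh a := by
    nlinarith [one_sub_mul_cosh_le_sinh hδ ha, mul_le_mul_of_nonneg_left ht₁.2 (cosh_pos a).le]
  have htb : cosh b * t₁ ≤ sinh b := by
    nlinarith [one_sub_mul_cosh_le_sinh hδ hb, mul_le_mul_of_nonneg_left ht₁.2 (cosh_pos b).le]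
  have hsc : 0 < sinh c := by
    have : 1 < cosh c := by
      nlinarith [cosh_sub a b, one_le_cosh (a - b), mul_pos hsa hsb, ht₁.2]
    exact sinh_pos_iff.2 (hc.lt_of_ne (one_lt_cosh.1 this).symm)
  have hacute_x : cosh b ≤ cosh a * cosh c := cosh_le_cosh_mul_cosh ha₀.le hb₀.le hta h₁
  have hacute_y : cosh a ≤ cosh b * cosh c :=
    cosh_le_cosh_mul_cosh hb₀.le ha₀.le htb (by rw [h₁]; ring)
  have hB : 0 ≤ sinh a * t₂ := by
    refine nonneg_of_mul_nonneg_left ?_ hsc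
    nlinarith
  have hBc : sinh a * t₂ * cosh c ≤ cosh a * sinh c := by
    have : cosh a * sinh c * sinh c - sinh a * t₂ * cosh c * sinh c =
        cosh b * cosh c - cosh a := by
      linear_combination (-cosh a) * cosh_sq c - cosh c * h₂
    exact le_of_mul_le_mul_right (by linarith) hsc
  have hBA : sinh a * t₂ < cosh a := by
    nlinarith [sinh_lt_cosh c, cosh_pos c, cosh_pos a]
  obtain ⟨s, hs, hfs⟩ := exists_mem_Icc_cosh_mul_sub_sinh_mul_eq_sqrt hB hBA hBc
  refine ⟨s, hs, ?_⟩
  rw [mul_assoc, hfs]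
  exact sqrt_le_sqrt (cosh_sq_sub_sinh_mul_sq_le hδ (mul_pos hsa hsb).le ht₁ hsc h₁ h₂)

section Model

open UpperHalfPlane
open scoped MatrixGroups

/-- Acts on `ℍ` as the rotation about `i` by the angle `2φ`. -/
noncomputable def rotationSL (φ : ℝ) : SL(2, ℝ) :=
  ⟨!![cos φ, sin φ; -sin φ, cos φ], by simp [Matrix.det_fin_two, ← sq, cos_sq_add_sin_sq]⟩

noncomputable def vertical (t : ℝ) : ℍ := mk ⟨0, exp t⟩ (exp_pos t)

lemma isometry_vertical : Isometry vertical := isometry_vertical_line 0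

lemma dist_vertical_zero {s : ℝ} (hs : 0 ≤ s) : dist (vertical 0) (vertical s) = s := by
  rw [isometry_vertical.dist_eq, Real.dist_eq, zero_sub, abs_neg, abs_of_nonneg hs]

lemma vertical_re (t : ℝ) : (vertical t).re = 0 := rfl

lemma vertical_im (t : ℝ) : (vertical t).im = exp t := rfl

lemma coe_rotationSL_smul_mul (φ : ℝ) (z : ℍ) :
    ((rotationSL φ • z : ℍ) : ℂ) * (-sin φ * z + cos φ) = cos φ * z + sin φ := by
  have hformula :
      ((rotationSL φ • z : ℍ) : ℂ) = (cos φ * z + sin φ) / (-sin φ * z + cos φ) := by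
    rw [coe_specialLinearGroup_apply]
    simp [rotationSL]
  refine hformula ▸ div_mul_cancel₀ _ fun h ↦ ?_
  have him := congrArg Complex.im h
  have hre := congrArg Complex.re h
  simp only [Complex.add_re, Complex.add_im, Complex.mul_re, Complex.mul_im, Complex.neg_re,
    Complex.neg_im, Complex.ofReal_re, Complex.ofReal_im, Complex.zero_re,
    Complex.zero_im] at him hre
  have hs : sin φ = 0 := by simpa [z.im_pos.ne'] using him
  have hc : cos φ = 0 := by simpa [hs] using hre
  simpa [hs, hc] using sin_sq_add_cos_sq φ

lemma cosh_dist_vertical_rotationSL_smul (φ s t : ℝ) :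
    cosh (dist (vertical s) (rotationSL φ • vertical t)) =
      cosh s * cosh t - sinh s * sinh t * cos (2 * φ) := by
  have hw := coe_rotationSL_smul_mul φ (vertical t)
  have e₁ := congrArg Complex.re hw
  have e₂ := congrArg Complex.im hw
  simp only [Complex.mul_re, Complex.mul_im, Complex.add_re, Complex.add_im, Complex.neg_re,
    Complex.neg_im, Complex.ofReal_re, Complex.ofReal_im, coe_re, coe_im, vertical_re,
    vertical_im] at e₁ e₂
  rw [cosh_dist', vertical_re, vertical_im, div_eq_iff (by positivity), cos_two_mul]
  set X := (rotationSL φ • vertical t).re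
  set Y := (rotationSL φ • vertical t).im
  set c := cos φ
  set S := sin φ
  set D := c ^ 2 + S ^ 2 * exp t ^ 2
  have h : S ^ 2 + c ^ 2 = 1 := sin_sq_add_cos_sq φ
  have hnorm : D * (X ^ 2 + Y ^ 2) = S ^ 2 + c ^ 2 * exp t ^ 2 := by
    linear_combination
      (S + X * c + Y * S * exp t) * e₁ + (c * exp t + Y * c - X * S * exp t) * e₂
  have him : D * Y = exp t := by
    linear_combination (S * exp t) * e₁ + c * e₂ + exp t * h
  have hD : D ≠ 0 := left_ne_zero_of_mul (him ▸ (exp_pos t).ne')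
  have hexp : S ^ 2 + c ^ 2 * exp t ^ 2 + exp s ^ 2 * D =
      2 * exp s * exp t * (cosh s * cosh t - sinh s * sinh t * (2 * c ^ 2 - 1)) := by
    rw [cosh_eq, cosh_eq, sinh_eq, sinh_eq, exp_neg, exp_neg]
    field_simp
    linear_combination 2 * (exp s ^ 2 * exp t ^ 2 + 1) * h
  apply mul_left_cancel₀ hD
  linear_combination
    hnorm - 2 * exp s * (cosh s * cosh t - sinh s * sinh t * (2 * c ^ 2 - 1)) * him + hexp

lemma rotationSL_smul_vertical_zero (φ : ℝ) : rotationSL φ • vertical 0 = vertical 0 := by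
  have h := cosh_dist_vertical_rotationSL_smul φ 0 0
  rw [sinh_zero, zero_mul, zero_mul, sub_zero, cosh_zero, mul_one, ← cosh_zero] at h
  exact (dist_eq_zero.1 (cosh_injOn dist_nonneg (le_refl (0 : ℝ)) h)).symm

end Model

section Geodesic

variable {X : Type*} [MetricSpace X]

lemma metricBtw_self_left (x y : X) : MetricBtw x x y := by simp [MetricBtw]

lemma metricBtw_self_right (x y : X) : MetricBtw x y y := by simp [MetricBtw]

lemma MetricBtw.dist_le {x p y : X} (h : MetricBtw x p y) : dist x p ≤ dist x y :=
  h ▸ le_add_of_nonneg_right dist_nonneg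

lemma Isometry.metricBtw {γ : ℝ → X} (hγ : Isometry γ) {r s t : ℝ} (hrs : r ≤ s)
    (hst : s ≤ t) : MetricBtw (γ r) (γ s) (γ t) := by
  simp only [MetricBtw, hγ.dist_eq, Real.dist_eq, abs_of_nonpos (sub_nonpos.2 hrs),
    abs_of_nonpos (sub_nonpos.2 hst), abs_of_nonpos (sub_nonpos.2 (hrs.trans hst))]
  ring

lemma IsGeodesicSpace.exists_metricBtw_dist_eq (hgeo : IsGeodesicSpace X) {x y : X} {s : ℝ}
    (hs₀ : 0 ≤ s) (hs : s ≤ dist x y) : ∃ p, MetricBtw x p y ∧ dist x p = s := by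
  obtain ⟨p, hp, hbtw⟩ :=
    hgeo x y (s / dist x y) ⟨by positivity, div_le_one_of_le₀ hs dist_nonneg⟩
  refine ⟨p, hbtw, ?_⟩
  rcases eq_or_ne (dist x y) 0 with h | h
  · rw [hp, h, mul_zero]; linarith
  · rw [hp, div_mul_cancel₀ _ h]

lemma IsGeodesicSpace.metricBtw_of_nearest_closedBall (hgeo : IsGeodesicSpace X)
    {x₀ x u : X} {r : ℝ} (hr : 0 ≤ r) (hrx : r ≤ dist x₀ x) (hu : u ∈ Metric.closedBall x₀ r)
    (hxu : ∀ w ∈ Metric.closedBall x₀ r, dist x u ≤ dist x w) :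
    MetricBtw x₀ u x ∧ dist x₀ u = r := by
  obtain ⟨w, hw, hw₀⟩ := hgeo.exists_metricBtw_dist_eq hr hrx
  have hxw := hxu w (Metric.mem_closedBall'.2 hw₀.le)
  have hu₀ := Metric.mem_closedBall'.1 hu
  have := dist_triangle x₀ u x
  unfold MetricBtw at hw ⊢
  rw [dist_comm x u, dist_comm x w] at hxw
  constructor <;> linarith

end Geodesic

/-- The CAT(-1) inequality in terms of the hyperbolic law of cosines: `t` is the cosine of the
angle at `x` of the comparison triangle in `ℍ`. -/
theorem IsCatMinusOne.exists_cosh_dist_le {X : Type*} [MetricSpace X] (hcat : IsCatMinusOne X)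
    (x y z : X) :
    ∃ t ∈ Icc (-1 : ℝ) 1,
      cosh (dist y z) =
        cosh (dist x y) * cosh (dist x z) - sinh (dist x y) * sinh (dist x z) * t ∧
      ∀ p q, MetricBtw x p y → MetricBtw x q z →
        cosh (dist p q) ≤
          cosh (dist x p) * cosh (dist x q) - sinh (dist x p) * sinh (dist x q) * t := by
  obtain ⟨t, ht, hlaw⟩ := exists_cosh_eq_cosh_mul_cosh_sub
    (by simpa only [dist_comm x] using abs_dist_sub_le y z x) (dist_triangle_left y z x)
  refine ⟨t, ht, hlaw, fun p q hp hq ↦ ?_⟩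
  set R := rotationSL (arccos t / 2)
  have hcos : ∀ s s', cosh (dist (vertical s) (R • vertical s')) =
      cosh s * cosh s' - sinh s * sinh s' * t := fun s s' ↦ by
    rw [cosh_dist_vertical_rotationSL_smul, mul_div_cancel₀ _ two_ne_zero, cos_arccos ht.1 ht.2]
  have hray : Isometry fun s ↦ R • vertical s := (isometry_smul _ R).comp isometry_vertical
  have hfix : R • vertical 0 = vertical 0 := rotationSL_smul_vertical_zero _
  have hdist : ∀ {s}, 0 ≤ s → dist (vertical 0) (R • vertical s) = s := fun hs ↦ by
    rw [← hfix, dist_smul, dist_vertical_zero hs]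
  have hcmp := hcat x y z p q hp hq (vertical 0) (vertical (dist x y)) (R • vertical (dist x z))
    (vertical (dist x p)) (R • vertical (dist x q)) (dist_vertical_zero dist_nonneg)
    (hdist dist_nonneg) (cosh_injOn dist_nonneg dist_nonneg ((hcos _ _).trans hlaw.symm))
    (isometry_vertical.metricBtw dist_nonneg hp.dist_le) (dist_vertical_zero dist_nonneg)
    (hfix ▸ hray.metricBtw dist_nonneg hq.dist_le) (hdist dist_nonneg)
  calc cosh (dist p q) ≤ cosh (dist (vertical (dist x p)) (R • vertical (dist x q))) :=
        cosh_le_cosh.2 (by rwa [abs_of_nonneg dist_nonneg, abs_of_nonneg dist_nonneg])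
    _ = _ := hcos _ _

theorem IsCatMinusOne.exists_metricBtw_dist_le {X : Type*} [MetricSpace X]
    (hgeo : IsGeodesicSpace X) (hcat : IsCatMinusOne X) {x₀ x y : X} {t₁ δ : ℝ}
    (hδ : 0 < δ) (hx : 1 / δ ≤ dist x₀ x) (hy : 1 / δ ≤ dist x₀ y)
    (ht₁ : t₁ ∈ Icc (-1) (1 - δ))
    (h₁ : cosh (dist x y) =
      cosh (dist x₀ x) * cosh (dist x₀ y) - sinh (dist x₀ x) * sinh (dist x₀ y) * t₁) :
    ∃ p, MetricBtw x p y ∧ dist p x₀ ≤ 1 + 1 / δ := by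
  obtain ⟨t₂, -, h₂, hcmp⟩ := hcat.exists_cosh_dist_le x y x₀
  rw [dist_comm y x₀, dist_comm x x₀] at h₂
  obtain ⟨s, hs, hfs⟩ :=
    exists_mem_Icc_cosh_mul_sub_sinh_mul_le hδ hx hy dist_nonneg ht₁ h₁ h₂
  obtain ⟨p, hp, hps⟩ := hgeo.exists_metricBtw_dist_eq hs.1 hs.2
  have hpx₀ := hcmp p x₀ hp (metricBtw_self_right x x₀)
  rw [hps, dist_comm x x₀] at hpx₀
  refine ⟨p, hp, ?_⟩
  calc dist p x₀ ≤ cosh (dist p x₀) :=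
        (self_le_sinh_iff.2 dist_nonneg).trans (sinh_lt_cosh _).le
    _ ≤ √(1 + 2 / δ) := hpx₀.trans hfs
    _ ≤ 1 + 1 / δ := sqrt_le_iff.2 ⟨by positivity, by
        linarith [sq_nonneg (1 / δ), show (1 + 1 / δ) ^ 2 = 1 + 2 / δ + (1 / δ) ^ 2 by ring]⟩

theorem segment_meets_ball_general {X : Type*} [MetricSpace X]
    (hgeo : IsGeodesicSpace X) (hcat : IsCatMinusOne X)
    (x₀ : X) (r ε : ℝ) (hr : 0 < r) (hε : 0 < ε) :
    ∃ R : ℝ, 0 < R ∧ ∀ x y u v : X,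
      u ∈ Metric.closedBall x₀ r →
      (∀ w ∈ Metric.closedBall x₀ r, dist x u ≤ dist x w) →
      v ∈ Metric.closedBall x₀ r →
      (∀ w ∈ Metric.closedBall x₀ r, dist y v ≤ dist y w) →
      ε ≤ dist u v →
      ∃ p : X, MetricBtw x p y ∧ p ∈ Metric.closedBall x₀ R := by
  have hsr : 0 < sinh r ^ 2 := pow_pos (sinh_pos_iff.2 hr) 2
  set δ := (cosh ε - 1) / sinh r ^ 2
  have hδ : 0 < δ := div_pos (sub_pos.2 (one_lt_cosh.2 hε.ne')) hsr
  have hδ' := one_div_pos.2 hδ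
  refine ⟨r + 1 + 1 / δ, by positivity, fun x y u v hu hxu hv hyv huv ↦ ?_⟩
  by_cases hx : dist x₀ x ≤ r + 1 + 1 / δ
  · exact ⟨x, metricBtw_self_left x y, Metric.mem_closedBall'.2 hx⟩
  by_cases hy : dist x₀ y ≤ r + 1 + 1 / δ
  · exact ⟨y, metricBtw_self_right x y, Metric.mem_closedBall'.2 hy⟩
  rw [not_le] at hx hy
  obtain ⟨hu', hru⟩ := hgeo.metricBtw_of_nearest_closedBall hr.le (by linarith) hu hxu
  obtain ⟨hv', hrv⟩ := hgeo.metricBtw_of_nearest_closedBall hr.le (by linarith) hv hyv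
  obtain ⟨t₁, ht₁, h₁, hcmp⟩ := hcat.exists_cosh_dist_le x₀ x y
  -- `cosh ε ≤ cosh (dist u v) ≤ 1 + sinh r ^ 2 * (1 - t₁)`
  have ht₁δ : t₁ ≤ 1 - δ := by
    have h := (cosh_le_cosh.2 (by rwa [abs_of_pos hε, abs_of_nonneg dist_nonneg])).trans
      (hcmp u v hu' hv')
    rw [hru, hrv] at h
    rw [le_sub_comm, div_le_iff₀ hsr]
    nlinarith [cosh_sq r]
  obtain ⟨p, hp, hpx₀⟩ := hcat.exists_metricBtw_dist_le hgeo hδ (by linarith) (by linarith)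
    ⟨ht₁.1, ht₁δ⟩ h₁
  exact ⟨p, hp, Metric.mem_closedBall.2 (by linarith)⟩

/-- In a complete CAT(-1) space: for `x₀ ∈ X` and `r, ε > 0` there is `R > 0`,
depending only on `r` and `ε`, such that whenever the metric projections `u, v` of
`x, y` onto the closed ball `B̄(x₀, r)` satisfy `d(u,v) ≥ ε`, the geodesic segment
`[x,y]` meets `B̄(x₀, R)`. -/
theorem segment_meets_ball {X : Type*} [MetricSpace X] [CompleteSpace X]
    (hgeo : IsGeodesicSpace X) (hcat : IsCatMinusOne X)
    (x₀ : X) (r ε : ℝ) (hr : 0 < r) (hε : 0 < ε) :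
    ∃ R : ℝ, 0 < R ∧ ∀ x y u v : X,
      u ∈ Metric.closedBall x₀ r →
      (∀ w ∈ Metric.closedBall x₀ r, dist x u ≤ dist x w) →
      v ∈ Metric.closedBall x₀ r →
      (∀ w ∈ Metric.closedBall x₀ r, dist y v ≤ dist y w) →
      ε ≤ dist u v →
      ∃ p : X, MetricBtw x p y ∧ p ∈ Metric.closedBall x₀ R :=
  segment_meets_ball_general hgeo hcat x₀ r ε hr hε
end

section
/- Let X be a complete CAT(0) space with geodesically bounded closed convex subsets having the following property: for a sequence (wₙ) in X, points yₙᵐ on the segments [θ, wₙ] at distance m from a fixed θ with d(θ,wₙ) → ∞. If for every m the sequence (yₙᵐ)ₙ converges to some yᵐ, then the points (yᵐ)_{m∈ℕ}, together with the interpolating segments, form a geodesic ray emanating from θ; in particular yᵐ ∈ [θ, y^M] whenever m < M and d(θ, yᵐ) = m. -/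
/-!
Geodesics in a CAT(0) space are unique: comparing the degenerate triangle `(x, z, z)` with a
segment of a line shows that two points of `[x, z]` are at distance `|d(x, p) - d(x, q)|`.
Hence `d(Yₙᵐ, Yₙᴹ) = M - m` as soon as `M ≤ d(θ, wₙ)`, and in the limit `d(θ, yᵐ) = m` and
`d(yᵐ, yᴹ) = M - m`, so the `yᵐ` are nested along segments from `θ`. The ray at time `t` is the
point at distance `t` from `θ` on `[θ, y^(⌊t⌋+1)]`; any two such points lie on a common segment
`[θ, yᴹ]`, and uniqueness of geodesics again gives their distance.
-/

open Filter Topology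

namespace MetricBtw

variable {X : Type*} [MetricSpace X] {x p q z : X}

theorem trans (hp : MetricBtw x p q) (hq : MetricBtw x q z) : MetricBtw x p z := by
  unfold MetricBtw at *
  linarith [dist_triangle p q z, dist_triangle x p z]

theorem dist_le_s19 (h : MetricBtw x p z) : dist x p ≤ dist x z := by
  unfold MetricBtw at h
  linarith [dist_nonneg (x := p) (y := z)]

end MetricBtw

theorem metricBtw_real {a b c : ℝ} (hab : a ≤ b) (hbc : b ≤ c) : MetricBtw a b c := by
  unfold MetricBtw
  rw [Real.dist_eq, Real.dist_eq, Real.dist_eq, abs_of_nonpos (by linarith),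
    abs_of_nonpos (by linarith), abs_of_nonpos (by linarith)]
  ring

theorem IsGeodesicSpace.exists_metricBtw_dist_eq_s19 {X : Type*} [MetricSpace X]
    (hgeo : IsGeodesicSpace X) (x z : X) {t : ℝ} (ht₀ : 0 ≤ t) (ht : t ≤ dist x z) :
    ∃ p, dist x p = t ∧ MetricBtw x p z := by
  have hratio : t / dist x z ∈ Set.Icc (0 : ℝ) 1 :=
    ⟨div_nonneg ht₀ dist_nonneg, div_le_one_of_le₀ ht dist_nonneg⟩
  obtain ⟨p, hp, hbtw⟩ := hgeo x z _ hratio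
  refine ⟨p, ?_, hbtw⟩
  rw [hp, div_mul_cancel_of_imp fun h => le_antisymm (h ▸ ht) ht₀]

theorem IsCatZero.dist_eq_abs_sub_of_metricBtw {X : Type*} [MetricSpace X] (hcat : IsCatZero X)
    {x p q z : X} (hp : MetricBtw x p z) (hq : MetricBtw x q z) :
    dist p q = |dist x p - dist x q| := by
  let e : ℝ → EuclideanSpace ℝ (Fin 2) := EuclideanSpace.single 0
  have he : ∀ a b, dist (e a) (e b) = dist a b := fun a b => by simp [e]
  have he₀ : ∀ a, 0 ≤ a → dist (e 0) (e a) = a := fun a ha => by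
    rw [he, dist_comm, Real.dist_eq, sub_zero, abs_of_nonneg ha]
  have hline : ∀ {a b c : ℝ}, a ≤ b → b ≤ c → MetricBtw (e a) (e b) (e c) :=
    fun hab hbc => by simpa [MetricBtw, he] using metricBtw_real hab hbc
  refine le_antisymm ?_ (by simpa only [dist_comm x] using abs_dist_sub_le p q x)
  have hcmp := hcat x z z p q hp hq (e 0) (e (dist x z)) (e (dist x z)) (e (dist x p))
    (e (dist x q)) (he₀ _ dist_nonneg) (he₀ _ dist_nonneg) (by simp)
    (hline dist_nonneg hp.dist_le_s19) (he₀ _ dist_nonneg)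
    (hline dist_nonneg hq.dist_le_s19) (he₀ _ dist_nonneg)
  rwa [he, Real.dist_eq] at hcmp

theorem dist_eq_of_tendsto_of_eventually_eq {α X : Type*} [MetricSpace X] {l : Filter α}
    [l.NeBot] {f g : α → X} {a b : X} {r : ℝ} (hf : Tendsto f l (𝓝 a)) (hg : Tendsto g l (𝓝 b))
    (h : ∀ᶠ n in l, dist (f n) (g n) = r) : dist a b = r :=
  tendsto_nhds_unique (hf.dist hg) (tendsto_const_nhds.congr' (h.mono fun _ hn => hn.symm))

theorem IsCatZero.exists_geodesicRay_of_nested {X : Type*} [MetricSpace X]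
    (hgeo : IsGeodesicSpace X) (hcat : IsCatZero X) {θ : X} {y : ℕ → X}
    (hdist : ∀ m : ℕ, dist θ (y m) = m) (hnested : ∀ m M : ℕ, m ≤ M → MetricBtw θ (y m) (y M)) :
    ∃ c : ℝ → X, (∀ s t : ℝ, 0 ≤ s → 0 ≤ t → dist (c s) (c t) = |s - t|) ∧
      c 0 = θ ∧ ∀ m : ℕ, c (m : ℝ) = y m := by
  have hpoint : ∀ t : ℝ, 0 ≤ t → ∃ p, dist θ p = t ∧ MetricBtw θ p (y (⌊t⌋₊ + 1)) := by
    intro t ht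
    refine hgeo.exists_metricBtw_dist_eq_s19 _ _ ht ?_
    rw [hdist]
    push_cast
    exact (Nat.lt_floor_add_one t).le
  have : Nonempty X := ⟨θ⟩
  choose! c hc using hpoint
  have hon : ∀ t : ℝ, 0 ≤ t → ∀ M : ℕ, t < M → MetricBtw θ (c t) (y M) := fun t ht M htM =>
    (hc t ht).2.trans (hnested _ _ ((Nat.floor_lt ht).2 htM))
  have hiso : ∀ s t : ℝ, 0 ≤ s → 0 ≤ t → dist (c s) (c t) = |s - t| := by
    intro s t hs ht
    obtain ⟨M, hM⟩ := exists_nat_gt (max s t)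
    rw [hcat.dist_eq_abs_sub_of_metricBtw (hon s hs M ((le_max_left s t).trans_lt hM))
      (hon t ht M ((le_max_right s t).trans_lt hM)), (hc s hs).1, (hc t ht).1]
  refine ⟨c, hiso, ?_, fun m => ?_⟩
  · exact dist_eq_zero.1 ((dist_comm _ _).trans (hc 0 le_rfl).1)
  · have hm : MetricBtw θ (y m) (y (m + 1)) := hnested m (m + 1) m.le_succ
    have hcm := hon m m.cast_nonneg (m + 1) (by push_cast; linarith)
    rw [← dist_eq_zero, hcat.dist_eq_abs_sub_of_metricBtw hcm hm, (hc _ m.cast_nonneg).1, hdist,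
      sub_self, abs_zero]

theorem limits_form_geodesic_ray_general {X : Type*} [MetricSpace X]
    (hgeo : IsGeodesicSpace X) (hcat : IsCatZero X)
    (θ : X) (w : ℕ → X)
    (hw : Filter.Tendsto (fun n => dist θ (w n)) Filter.atTop Filter.atTop)
    (Y : ℕ → ℕ → X)
    (hY : ∀ m n : ℕ, (m : ℝ) ≤ dist θ (w n) →
      MetricBtw θ (Y n m) (w n) ∧ dist θ (Y n m) = m)
    (y : ℕ → X)
    (hconv : ∀ m : ℕ, Filter.Tendsto (fun n => Y n m) Filter.atTop (nhds (y m))) :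
    (∀ m : ℕ, dist θ (y m) = m) ∧
    (∀ m M : ℕ, m < M → MetricBtw θ (y m) (y M)) ∧
    ∃ c : ℝ → X, (∀ s t : ℝ, 0 ≤ s → 0 ≤ t → dist (c s) (c t) = |s - t|) ∧
      c 0 = θ ∧ ∀ m : ℕ, c (m : ℝ) = y m := by
  have hθ : ∀ m : ℕ, dist θ (y m) = m := fun m =>
    dist_eq_of_tendsto_of_eventually_eq tendsto_const_nhds (hconv m)
      ((hw.eventually_ge_atTop (m : ℝ)).mono fun n hn => (hY m n hn).2)
  have hstep : ∀ m M : ℕ, m ≤ M → dist (y m) (y M) = M - m := by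
    intro m M hmM
    refine dist_eq_of_tendsto_of_eventually_eq (hconv m) (hconv M) ?_
    filter_upwards [hw.eventually_ge_atTop (M : ℝ)] with n hn
    have hm := hY m n (le_trans (by exact_mod_cast hmM) hn)
    have hM := hY M n hn
    rw [hcat.dist_eq_abs_sub_of_metricBtw hm.1 hM.1, hm.2, hM.2, abs_sub_comm,
      abs_of_nonneg (sub_nonneg.2 (by exact_mod_cast hmM))]
  have hnested : ∀ m M : ℕ, m ≤ M → MetricBtw θ (y m) (y M) := fun m M hmM => by
    rw [MetricBtw, hθ, hθ, hstep m M hmM, add_sub_cancel]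
  exact ⟨hθ, fun m M h => hnested m M h.le, hcat.exists_geodesicRay_of_nested hgeo hθ hnested⟩

/-- In a complete CAT(0) space: let `θ ∈ X`, `d(θ, wₙ) → ∞`, and for each `m` let
`Y n m` be the point of `[θ, wₙ]` at distance `m` from `θ` (whenever `m ≤ d(θ,wₙ)`).
If each sequence `(Y n m)ₙ` converges to `y m`, then `d(θ, y m) = m`, the limits
are nested (`y m ∈ [θ, y M]` for `m < M`), and together with the interpolating
segments they form a geodesic ray emanating from `θ`. -/
theorem limits_form_geodesic_ray {X : Type*} [MetricSpace X] [CompleteSpace X]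
    (hgeo : IsGeodesicSpace X) (hcat : IsCatZero X)
    (θ : X) (w : ℕ → X)
    (hw : Filter.Tendsto (fun n => dist θ (w n)) Filter.atTop Filter.atTop)
    (Y : ℕ → ℕ → X)
    (hY : ∀ m n : ℕ, (m : ℝ) ≤ dist θ (w n) →
      MetricBtw θ (Y n m) (w n) ∧ dist θ (Y n m) = m)
    (y : ℕ → X)
    (hconv : ∀ m : ℕ, Filter.Tendsto (fun n => Y n m) Filter.atTop (nhds (y m))) :
    (∀ m : ℕ, dist θ (y m) = m) ∧
    (∀ m M : ℕ, m < M → MetricBtw θ (y m) (y M)) ∧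
    ∃ c : ℝ → X, (∀ s t : ℝ, 0 ≤ s → 0 ≤ t → dist (c s) (c t) = |s - t|) ∧
      c 0 = θ ∧ ∀ m : ℕ, c (m : ℝ) = y m :=
  limits_form_geodesic_ray_general hgeo hcat θ w hw Y hY y hconv
end
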